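/- Let p ∈ [1, 2) and define f_p: T → R on the unit circle by f_p(z) = |(z−1)/2|^p. Then every Fourier coefficient of f_p is nonzero: the 0-th Fourier coefficient ∫_T f_p dλ is strictly positive, and for every nonzero integer n, the n-th Fourier coefficient is strictly negative. -/

import Mathlib

/-!
Write `s = p / 2 ∈ (0, 1)`. On the circle `f_p (e^{iθ}) = ((1 - cos θ) / 2) ^ s`, and the binomial
series gives `((1 - cos θ) / 2) ^ s = 2⁻ˢ ∑ₖ (-1)ᵏ C(s, k) cosᵏ θ` for almost every `θ`.
For `0 < s < 1` all the coefficients `(-1)ᵏ C(s, k)` with `k ≥ 1` are negative, and they are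
absolutely summable (their partial sums are bounded by letting `x → 1⁻` in the series of
`(1 - x) ^ s`), so the series can be integrated term by term. Every `cosᵏ` has nonnegative
Fourier coefficients, the constant term only contributes to the `0`-th one, and `cos^|n|` has a
positive `n`-th coefficient; hence the `n`-th coefficient of `f_p` is negative for `n ≠ 0`. The
`0`-th one is the mean of a function that is positive off `θ = 0`.
-/

open MeasureTheory

/-- The `n`-th Fourier coefficient of a function on the unit circle,
written in the angular variable: `c_n = (1/(2π)) ∫_0^{2π} f(e^{iθ}) e^{-inθ} dθ`,
i.e. the integral of `f(z) z^{-n}` against the normalized Haar measure of the circle. -/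
noncomputable def circleFourierCoeff (f : ℂ → ℝ) (n : ℤ) : ℂ :=
  (1 / (2 * Real.pi) : ℂ) *
    ∫ θ in (0:ℝ)..(2 * Real.pi),
      (f (Complex.exp (θ * Complex.I)) : ℂ) * Complex.exp (-(n : ℂ) * θ * Complex.I)

open Finset Filter Topology Real
open Complex (I)

theorem Ring.choose_succ_eq_mul_div {R : Type*} [Field R] [CharZero R] (a : R) (k : ℕ) :
    Ring.choose a (k + 1) = Ring.choose a k * (a - k) / (k + 1) := by
  rw [Ring.choose_eq_smul, Ring.choose_eq_smul, descPochhammer_succ_right, Polynomial.smeval_mul]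
  simp only [Nat.factorial_succ, Nat.cast_mul, Nat.cast_add, Nat.cast_one, mul_inv_rev,
    Polynomial.smeval_sub, Polynomial.smeval_X, pow_one, Polynomial.smeval_natCast, pow_zero,
    nsmul_eq_mul, mul_one, smul_eq_mul]
  field_simp

theorem Real.neg_one_pow_mul_choose_neg {s : ℝ} (hs : s ∈ Set.Ioo 0 1) :
    ∀ {k : ℕ}, k ≠ 0 → (-1) ^ k * Ring.choose s k < 0
  | 1, _ => by simpa using hs.1
  | k + 2, _ => by
    have hk : (0 : ℝ) < (k + 1 - s) / (k + 2) := by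
      have : (0 : ℝ) ≤ k := k.cast_nonneg
      exact div_pos (by linarith [hs.2]) (by positivity)
    have ih := Real.neg_one_pow_mul_choose_neg hs k.succ_ne_zero
    calc (-1) ^ (k + 2) * Ring.choose s (k + 2)
        = (-1) ^ (k + 1) * Ring.choose s (k + 1) * ((k + 1 - s) / (k + 2)) := by
          rw [Ring.choose_succ_eq_mul_div]; push_cast; ring
      _ < 0 := mul_neg_of_neg_of_pos ih hk

theorem Real.hasSum_choose_mul_pow (a : ℝ) {x : ℝ} (hx : |x| < 1) :
    HasSum (fun k => Ring.choose a k * x ^ k) ((1 + x) ^ a) := by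
  have h := (Real.one_add_rpow_hasFPowerSeriesOnBall_zero (a := a)).hasSum (y := x)
    (by simpa [Metric.mem_eball, edist_dist] using hx)
  simpa [binomialSeries, FormalMultilinearSeries.ofScalars] using h

theorem Real.sum_range_abs_choose_succ_le_one {s : ℝ} (hs : s ∈ Set.Ioo 0 1) (N : ℕ) :
    ∑ k ∈ range N, |Ring.choose s (k + 1)| ≤ 1 := by
  have habs (k : ℕ) (x : ℝ) :
      |Ring.choose s (k + 1)| * x ^ (k + 1) = -(Ring.choose s (k + 1) * (-x) ^ (k + 1)) := by
    have hc := Real.neg_one_pow_mul_choose_neg hs k.succ_ne_zero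
    calc |Ring.choose s (k + 1)| * x ^ (k + 1)
        = -((-1) ^ (k + 1) * Ring.choose s (k + 1)) * x ^ (k + 1) := by
          rw [← abs_of_neg hc, abs_mul, abs_neg_one_pow, one_mul]
      _ = _ := by rw [neg_pow]; ring
  -- for `0 ≤ x < 1` these are partial sums of the series of `1 - (1 - x) ^ s`; then let `x → 1⁻`
  have hpoly : ∀ x ∈ Set.Ico (0 : ℝ) 1,
      ∑ k ∈ range N, |Ring.choose s (k + 1)| * x ^ (k + 1) ≤ 1 := by
    intro x hx
    have hsum := (hasSum_nat_add_iff' 1).mpr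
      (Real.hasSum_choose_mul_pow s (x := -x) (by rw [abs_neg, abs_of_nonneg hx.1]; exact hx.2))
    simp only [range_one, sum_singleton, Ring.choose_zero_right, pow_zero, mul_one] at hsum
    simp only [habs]
    have := sum_le_hasSum (range N) (fun k _ => ?_) hsum.neg
    · linarith [Real.rpow_nonneg (by linarith [hx.2] : (0 : ℝ) ≤ 1 + -x) s]
    · rw [← habs]; have := hx.1; positivity
  have hlim : Tendsto (fun x : ℝ => ∑ k ∈ range N, |Ring.choose s (k + 1)| * x ^ (k + 1))
      (𝓝[<] 1) (𝓝 (∑ k ∈ range N, |Ring.choose s (k + 1)|)) := by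
    have : Continuous (fun x : ℝ => ∑ k ∈ range N, |Ring.choose s (k + 1)| * x ^ (k + 1)) := by
      fun_prop
    simpa using (this.tendsto 1).mono_left nhdsWithin_le_nhds
  refine le_of_tendsto hlim ?_
  filter_upwards [Ioo_mem_nhdsLT (show (0 : ℝ) < 1 by norm_num)] with x hx
  exact hpoly x (Set.Ioo_subset_Ico_self hx)

theorem Real.summable_abs_choose {s : ℝ} (hs : s ∈ Set.Ioo 0 1) :
    Summable fun k => |Ring.choose s k| :=
  (summable_nat_add_iff 1).mp <|
    summable_of_sum_range_le (fun _ => abs_nonneg _) (Real.sum_range_abs_choose_succ_le_one hs)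

theorem integral_exp_int_mul_I (m : ℤ) :
    ∫ θ in (0 : ℝ)..2 * π, Complex.exp (m * θ * I) = if m = 0 then ((2 * π : ℝ) : ℂ) else 0 := by
  split_ifs with hm
  · simp [hm]
  · have hc : (m : ℂ) * I ≠ 0 := mul_ne_zero (by exact_mod_cast hm) Complex.I_ne_zero
    simp_rw [mul_right_comm _ _ I]
    rw [integral_exp_mul_complex hc]
    have : (m : ℂ) * I * ((2 * π : ℝ) : ℂ) = m * (2 * π * I) := by push_cast; ring
    rw [this, Complex.exp_int_mul_two_pi_mul_I]
    simp

def cosPowCoeff (k : ℕ) (n : ℤ) : ℕ :=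
  ∑ j ∈ (range (k + 1)).filter (fun j : ℕ => 2 * (j : ℤ) = k + n), k.choose j

theorem cos_pow_mul_exp_eq_sum (k : ℕ) (n : ℤ) (θ : ℝ) :
    (Real.cos θ : ℂ) ^ k * Complex.exp (-n * θ * I) =
      ∑ j ∈ range (k + 1),
        (k.choose j / 2 ^ k : ℂ) * Complex.exp ((2 * j - k - n : ℤ) * θ * I) := by
  rw [Complex.ofReal_cos, Complex.cos, div_pow, add_pow, sum_div, sum_mul]
  refine sum_congr rfl fun j hj => ?_
  have hjk : j ≤ k := Nat.lt_succ_iff.mp (mem_range.mp hj)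
  rw [← Complex.exp_nat_mul, ← Complex.exp_nat_mul, Nat.cast_sub hjk, div_mul_eq_mul_div, div_mul_eq_mul_div, ← Complex.exp_add, mul_right_comm,
    ← Complex.exp_add, mul_comm]
  congr 3
  push_cast
  ring

theorem integral_cos_pow_mul_exp (k : ℕ) (n : ℤ) :
    ∫ θ in (0 : ℝ)..2 * π, (Real.cos θ : ℂ) ^ k * Complex.exp (-n * θ * I) =
      ((2 * π / 2 ^ k * cosPowCoeff k n : ℝ) : ℂ) := by
  simp_rw [cos_pow_mul_exp_eq_sum]
  rw [intervalIntegral.integral_finsetSum fun j _ =>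
    (by fun_prop : Continuous _).intervalIntegrable _ _]
  simp_rw [intervalIntegral.integral_const_mul, integral_exp_int_mul_I, cosPowCoeff]
  push_cast
  rw [sum_filter, mul_sum]
  refine sum_congr rfl fun j _ => ?_
  have : (2 * j - k - n : ℤ) = 0 ↔ (2 * j : ℤ) = k + n := by omega
  simp only [this]
  split_ifs <;> ring

theorem cosPowCoeff_zero_left {n : ℤ} (hn : n ≠ 0) : cosPowCoeff 0 n = 0 := by
  simp [cosPowCoeff, Ne.symm hn]

theorem cosPowCoeff_natAbs_pos (n : ℤ) : 0 < cosPowCoeff n.natAbs n := by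
  obtain ⟨j, hj, hjn⟩ : ∃ j ≤ n.natAbs, 2 * (j : ℤ) = n.natAbs + n := by
    rcases Int.natAbs_eq n with h | h
    · exact ⟨n.natAbs, le_rfl, by omega⟩
    · exact ⟨0, Nat.zero_le _, by omega⟩
  exact sum_pos' (fun _ _ => Nat.zero_le _)
    ⟨j, mem_filter.mpr ⟨mem_range.mpr (Nat.lt_succ_of_le hj), hjn⟩, Nat.choose_pos hj⟩

theorem hasSum_intervalIntegral_of_hasSum_pow {a : ℕ → ℝ} (ha : Summable fun k => |a k|)
    {u : ℝ → ℝ} (hu : Continuous u) (hu1 : ∀ θ, |u θ| ≤ 1) {g : ℝ → ℝ}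
    (hg : ∀ᵐ θ, HasSum (fun k => a k * u θ ^ k) (g θ)) {h : ℝ → ℂ} (hh : Continuous h)
    (b c : ℝ) :
    HasSum (fun k => a k * ∫ θ in b..c, (u θ : ℂ) ^ k * h θ) (∫ θ in b..c, (g θ : ℂ) * h θ) := by
  simp_rw [← intervalIntegral.integral_const_mul, ← mul_assoc]
  refine intervalIntegral.hasSum_integral_of_dominated_convergence
    (fun k θ => |a k| * ‖h θ‖) (fun k => by fun_prop) (fun k => ae_of_all _ fun θ _ => ?_)
    (ae_of_all _ fun θ _ => ha.mul_right _) ?_ (hg.mono fun θ hθ _ => ?_)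
  · rw [norm_mul, norm_mul, norm_pow, Complex.norm_real, Complex.norm_real, Real.norm_eq_abs]
    gcongr
    exact mul_le_of_le_one_right (abs_nonneg _) (pow_le_one₀ (norm_nonneg _) (hu1 θ))
  · simp_rw [tsum_mul_right]
    exact (continuous_const.mul hh.norm).intervalIntegrable b c
  · exact ((Complex.hasSum_ofReal.mpr hθ).mul_right (h θ)).congr_fun fun k => by push_cast; ring

theorem norm_exp_mul_I_sub_one_div_two_rpow (p θ : ℝ) :
    ‖(Complex.exp (θ * I) - 1) / 2‖ ^ p = ((1 - Real.cos θ) / 2) ^ (p / 2) := by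
  have hsin : ‖(Complex.exp (θ * I) - 1) / 2‖ = |Real.sin (θ / 2)| := by
    rw [norm_div, mul_comm, Complex.norm_exp_I_mul_ofReal_sub_one, norm_mul, Real.norm_eq_abs]
    simp
  have hcos : (1 - Real.cos θ) / 2 = |Real.sin (θ / 2)| ^ (2 : ℝ) := by
    rw [Real.rpow_two, sq_abs, Real.sin_sq, Real.cos_sq, mul_div_cancel₀ _ two_ne_zero]
    ring
  rw [hsin, hcos, ← Real.rpow_mul (abs_nonneg _)]
  congr 1
  ring

theorem ae_abs_cos_lt_one : ∀ᵐ θ : ℝ, |Real.cos θ| < 1 := by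
  have hnull : volume (Set.range fun m : ℤ => m * π) = 0 := (Set.countable_range _).measure_zero _
  refine measure_mono_null (fun θ (hθ : ¬ |Real.cos θ| < 1) => ?_) hnull
  have hsin : Real.sin θ = 0 := by
    nlinarith [Real.sin_sq_add_cos_sq θ, Real.abs_cos_le_one θ, sq_abs (Real.cos θ),
      sq_nonneg (Real.sin θ)]
  exact Real.sin_eq_zero_iff.mp hsin

theorem cos_lt_one_of_mem_Ioo {θ : ℝ} (hθ : θ ∈ Set.Ioo 0 (2 * π)) : Real.cos θ < 1 :=
  (Real.cos_le_one θ).lt_of_ne fun h =>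
    hθ.1.ne' ((Real.cos_eq_one_iff_of_lt_of_lt (by linarith [hθ.1, Real.pi_pos]) hθ.2).mp h)

theorem integral_one_sub_cos_div_two_rpow_pos {s : ℝ} (hs : 0 ≤ s) :
    0 < ∫ θ in (0 : ℝ)..2 * π, ((1 - Real.cos θ) / 2) ^ s := by
  refine intervalIntegral.intervalIntegral_pos_of_pos_on ?_ (fun θ hθ => ?_) (by positivity)
  · exact ((by fun_prop : Continuous fun θ => (1 - Real.cos θ) / 2).rpow_const
      fun _ => Or.inr hs).intervalIntegrable _ _
  · exact Real.rpow_pos_of_pos (by linarith [cos_lt_one_of_mem_Ioo hθ]) s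

theorem hasSum_one_sub_div_two_rpow (s : ℝ) {x : ℝ} (hx : |x| < 1) :
    HasSum (fun k => (-1) ^ k * Ring.choose s k / 2 ^ s * x ^ k) (((1 - x) / 2) ^ s) := by
  have h := (Real.hasSum_choose_mul_pow s (x := -x) (by rwa [abs_neg])).div_const (2 ^ s)
  rw [← sub_eq_add_neg] at h
  rw [Real.div_rpow (by linarith [(abs_lt.mp hx).2]) zero_le_two]
  exact h.congr_fun fun k => by rw [neg_pow]; ring

theorem exists_neg_integral_one_sub_cos_div_two_rpow_mul_exp {s : ℝ} (hs : s ∈ Set.Ioo 0 1)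
    {n : ℤ} (hn : n ≠ 0) :
    ∃ S : ℝ, S < 0 ∧ ∫ θ in (0 : ℝ)..2 * π,
      ((((1 - Real.cos θ) / 2) ^ s : ℝ) : ℂ) * Complex.exp (-n * θ * I) = S := by
  set a : ℕ → ℝ := fun k => (-1) ^ k * Ring.choose s k / 2 ^ s
  set w : ℕ → ℝ := fun k => a k * (2 * π / 2 ^ k * cosPowCoeff k n)
  have ha : Summable fun k => |a k| :=
    ((Real.summable_abs_choose hs).div_const (2 ^ s)).congr fun k => by
      simp [a, abs_div, abs_mul, abs_of_pos (Real.rpow_pos_of_pos two_pos s)]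
  have hw : HasSum (fun k => (w k : ℂ)) (∫ θ in (0 : ℝ)..2 * π,
      ((((1 - Real.cos θ) / 2) ^ s : ℝ) : ℂ) * Complex.exp (-n * θ * I)) := by
    have := hasSum_intervalIntegral_of_hasSum_pow ha Real.continuous_cos Real.abs_cos_le_one
      (ae_abs_cos_lt_one.mono fun θ hθ => hasSum_one_sub_div_two_rpow s hθ)
      (h := fun θ => Complex.exp (-n * θ * I)) (by fun_prop) 0 (2 * π)
    simpa only [integral_cos_pow_mul_exp, w, Complex.ofReal_mul] using this
  have h2s : (0 : ℝ) < 2 ^ s := Real.rpow_pos_of_pos two_pos s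
  have hw_nonpos (k : ℕ) : w k ≤ 0 := by
    rcases eq_or_ne k 0 with rfl | hk
    · simp [w, cosPowCoeff_zero_left hn]
    · exact mul_nonpos_of_nonpos_of_nonneg
        (div_nonpos_of_nonpos_of_nonneg (Real.neg_one_pow_mul_choose_neg hs hk).le h2s.le)
        (by positivity)
  have hw_neg : w n.natAbs < 0 := by
    have : (0 : ℝ) < cosPowCoeff n.natAbs n := by exact_mod_cast cosPowCoeff_natAbs_pos n
    exact mul_neg_of_neg_of_pos
      (div_neg_of_neg_of_pos (Real.neg_one_pow_mul_choose_neg hs (Int.natAbs_ne_zero.mpr hn)) h2s)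
      (mul_pos (by positivity) this)
  have hS := (Complex.summable_ofReal.mp hw.summable).hasSum
  exact ⟨∑' k, w k, hasSum_lt hw_nonpos hw_neg hS hasSum_zero,
    hw.unique (Complex.hasSum_ofReal.mpr hS)⟩

theorem circleFourierCoeff_norm_sub_one_div_two_rpow (p : ℝ) (n : ℤ) :
    circleFourierCoeff (fun z => ‖(z - 1) / 2‖ ^ p) n = 1 / (2 * π) * ∫ θ in (0 : ℝ)..2 * π,
      ((((1 - Real.cos θ) / 2) ^ (p / 2) : ℝ) : ℂ) * Complex.exp (-n * θ * I) := by
  simp only [circleFourierCoeff, norm_exp_mul_I_sub_one_div_two_rpow]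

theorem stmt_14 (p : ℝ) (hp : p ∈ Set.Ico (1:ℝ) 2) :
    (∃ c : ℝ, 0 < c ∧
        circleFourierCoeff (fun z => (‖(z - 1) / 2‖)^p) 0 = (c : ℂ))
    ∧ ∀ n : ℤ, n ≠ 0 → ∃ c : ℝ, c < 0 ∧
        circleFourierCoeff (fun z => (‖(z - 1) / 2‖)^p) n = (c : ℂ) := by
  have hs : p / 2 ∈ Set.Ioo 0 1 := ⟨by linarith [hp.1], by linarith [hp.2]⟩
  refine ⟨?_, fun n hn => ?_⟩
  · refine ⟨1 / (2 * π) * ∫ θ in (0 : ℝ)..2 * π, ((1 - Real.cos θ) / 2) ^ (p / 2),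
      mul_pos (by positivity) (integral_one_sub_cos_div_two_rpow_pos hs.1.le), ?_⟩
    rw [circleFourierCoeff_norm_sub_one_div_two_rpow]
    simp [intervalIntegral.integral_ofReal]
  · obtain ⟨S, hS, hint⟩ := exists_neg_integral_one_sub_cos_div_two_rpow_mul_exp hs hn
    refine ⟨1 / (2 * π) * S, mul_neg_of_pos_of_neg (by positivity) hS, ?_⟩
    rw [circleFourierCoeff_norm_sub_one_div_two_rpow, hint]
    push_cast
    ring
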